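/- Let $m \geq 2$ and let $f \in \mathbb{C}[[x,y]]$ with $\mathrm{ord}(f) = m$, and suppose the degree-$m$ homogeneous part $f_m$ of $f$ has the form $f_m = x^{\mu} y^{\nu} g$ with $\mu, \nu \geq 1$ and $x \nmid g$, $y \nmid g$. Then $\dim_{\mathbb{C}} \mathbb{C}[[x,y]] / \big( \langle \partial f/\partial x, \partial f/\partial y \rangle + \langle x,y \rangle^m \big) = \frac{m(m+1)}{2} - 2$. -/

import Mathlib

set_option synthInstance.maxHeartbeats 1000000
set_option maxHeartbeats 2000000

open MvPowerSeries TrivSqZeroExt DualNumber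

noncomputable section

abbrev R2 := MvPowerSeries (Fin 2) ℂ

def Mxy : Ideal R2 := Ideal.span {MvPowerSeries.X 0, MvPowerSeries.X 1}

/-- Formal partial derivative of a power series in two variables. -/
def pd (i : Fin 2) (f : R2) : R2 :=
  fun d => (d i + 1 : ℂ) * MvPowerSeries.coeff (R := ℂ) (d + Finsupp.single i 1) f

/-- The element `x + ε a` of the dual numbers over `ℂ[[x,y]]`. -/
def Xa (a : R2) : DualNumber R2 := inl (MvPowerSeries.X 0) + eps * inl a

/-- The element `y + ε b` of the dual numbers over `ℂ[[x,y]]`. -/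
def Yb (b : R2) : DualNumber R2 := inl (MvPowerSeries.X 1) + eps * inl b

/-- The `n`-th term of the expansion of `f (x + ε a, y + ε b)`. -/
def termD (a b f : R2) (n : Fin 2 →₀ ℕ) : DualNumber R2 :=
  inl (MvPowerSeries.C (σ := Fin 2) (R := ℂ) (MvPowerSeries.coeff (R := ℂ) n f)) *
    (Xa a ^ (n 0) * Yb b ^ (n 1))

/-- Substitution `f (x + ε a, y + ε b)`, defined coefficientwise: each coefficient of
each component only receives contributions from finitely many terms of the expansion. -/
def substDual (a b f : R2) : DualNumber R2 :=
  TrivSqZeroExt.inl (R := R2) (M := R2) ((fun d => MvPowerSeries.coeff (R := ℂ) d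
        (fst (∑ n ∈ Finset.Iic (d + Finsupp.single 0 1 + Finsupp.single 1 1),
          termD a b f n)) : R2)) +
  TrivSqZeroExt.inr (R := R2) (M := R2) ((fun d => MvPowerSeries.coeff (R := ℂ) d
        (snd (∑ n ∈ Finset.Iic (d + Finsupp.single 0 1 + Finsupp.single 1 1),
          termD a b f n)) : R2))

/-!
Since `f ∈ Mxy ^ m`, both partials lie in `Mxy ^ (m - 1)`, so modulo `Mxy ^ m` the ideal they
generate is only their `ℂ`-span: the maximal ideal multiplies them into `Mxy ^ m`. The colength is
therefore `dim R2 ⧸ Mxy ^ m = m(m+1)/2` minus the rank of their degree `m - 1` parts, which are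
the partials of the tangent cone `f_m = x^μ y^ν g`. These two are independent because `x^μ`
divides `∂f_m/∂y` but not `∂f_m/∂x`, and symmetrically for `y^ν`.
-/

open Finset Finsupp

namespace MvPolynomial

lemma not_X_pow_dvd_pderiv_X_pow_mul {σ K : Type*} [Field K] [CharZero K] {i : σ} {n : ℕ}
    {h : MvPolynomial σ K} (hn : n ≠ 0) (hh : ¬ X i ∣ h) :
    ¬ X i ^ n ∣ pderiv i (X i ^ n * h) := by
  obtain ⟨n, rfl⟩ := Nat.exists_eq_add_one_of_ne_zero hn
  intro hdvd
  rw [Derivation.leibniz, pderiv_pow, pderiv_X_self, smul_eq_mul, smul_eq_mul,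
    (dvd_add_right (dvd_mul_right _ _)), Nat.add_sub_cancel, pow_succ,
    show h * (↑(n + 1) * X i ^ n * 1) = X i ^ n * (↑(n + 1) * h) by ring,
    mul_dvd_mul_iff_left (pow_ne_zero _ (X_ne_zero i))] at hdvd
  have hunit : IsUnit ((n + 1 : ℕ) : MvPolynomial σ K) := by
    rw [← map_natCast C]
    exact (isUnit_iff_ne_zero.2 (Nat.cast_ne_zero.2 n.succ_ne_zero)).map C
  exact hh ((hunit.dvd_mul_left).1 hdvd)

lemma X_pow_dvd_pderiv_X_pow_mul {σ R : Type*} [CommSemiring R] {i j : σ} {n : ℕ}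
    {h : MvPolynomial σ R} (hij : i ≠ j) : X i ^ n ∣ pderiv j (X i ^ n * h) := by
  rw [Derivation.leibniz, pderiv_pow, pderiv_X_of_ne hij]
  simp

section Field

variable {σ K : Type*} [Field K] {i j : σ}

lemma not_X_dvd_X_pow_mul (hij : i ≠ j) {n : ℕ} {g : MvPolynomial σ K} (hg : ¬ X i ∣ g) :
    ¬ X i ∣ X j ^ n * g := by
  intro hdvd
  rcases X_prime.dvd_or_dvd hdvd with h | h
  · exact hij (X_dvd_X.1 (X_prime.dvd_of_dvd_pow h))
  · exact hg h

variable [CharZero K]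

lemma eq_zero_of_smul_pderiv_add_smul_pderiv_eq_zero (hij : i ≠ j) {n : ℕ} (hn : n ≠ 0)
    {h : MvPolynomial σ K} (hh : ¬ X i ∣ h) {s t : K}
    (hst : s • pderiv i (X i ^ n * h) + t • pderiv j (X i ^ n * h) = 0) : s = 0 := by
  by_contra hs
  refine not_X_pow_dvd_pderiv_X_pow_mul hn hh ?_
  rw [← ((isUnit_iff_ne_zero.2 hs).map C).dvd_mul_left, ← smul_eq_C_mul,
    eq_neg_of_add_eq_zero_left hst, dvd_neg, smul_eq_C_mul]
  exact dvd_mul_of_dvd_right (X_pow_dvd_pderiv_X_pow_mul hij) _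

theorem linearIndependent_pderiv_X_pow_mul_X_pow_mul (hij : i ≠ j) {μ ν : ℕ} (hμ : μ ≠ 0)
    (hν : ν ≠ 0) {g : MvPolynomial σ K} (hgi : ¬ X i ∣ g) (hgj : ¬ X j ∣ g) :
    LinearIndependent K
      ![pderiv i (X i ^ μ * X j ^ ν * g), pderiv j (X i ^ μ * X j ^ ν * g)] := by
  refine LinearIndependent.pair_iff.2 fun s t hst => ⟨?_, ?_⟩
  · rw [mul_assoc] at hst
    exact eq_zero_of_smul_pderiv_add_smul_pderiv_eq_zero hij hμ (not_X_dvd_X_pow_mul hij hgi) hst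
  · rw [mul_comm (X i ^ μ), mul_assoc, add_comm] at hst
    exact eq_zero_of_smul_pderiv_add_smul_pderiv_eq_zero hij.symm hν
      (not_X_dvd_X_pow_mul hij.symm hgj) hst

end Field

end MvPolynomial

lemma MvPowerSeries.order_X {σ R : Type*} [Semiring R] [Nontrivial R] (i : σ) :
    (X i : MvPowerSeries σ R).order = 1 := by
  rw [X, order_monomial_of_ne_zero one_ne_zero, degree_single, Nat.cast_one]

lemma constantCoeff_eq_zero_of_mem_Mxy {f : R2} (hf : f ∈ Mxy) : constantCoeff f = 0 := by
  refine (Ideal.span_le (I := RingHom.ker constantCoeff)).2 ?_ hf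
  rintro _ (rfl | rfl) <;> simp

lemma exists_eq_X_zero_mul_add_X_one_mul {f : R2} (hf : constantCoeff f = 0) :
    ∃ g h : R2, f = X 0 * g + X 1 * h ∧
      f.order ≤ (X 0 * g).order ∧ f.order ≤ (X 1 * h).order := by
  set f₁ : R2 := fun d => if d 0 = 0 then coeff d f else 0
  have hf₁ : f.order ≤ f₁.order := le_order fun d hd => by
    change (if d 0 = 0 then coeff d f else 0) = 0
    split_ifs <;> simp [coeff_of_lt_order hd]
  obtain ⟨g, hg⟩ : X 0 ∣ f - f₁ := X_dvd_iff.2 fun d hd => by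
    change coeff d f - (if d 0 = 0 then coeff d f else 0) = 0
    simp [hd]
  obtain ⟨h, hh⟩ : X 1 ∣ f₁ := X_dvd_iff.2 fun d hd => by
    change (if d 0 = 0 then coeff d f else 0) = 0
    split_ifs with h0
    · obtain rfl : d = 0 := by ext i; fin_cases i <;> assumption
      simpa using hf
    · rfl
  refine ⟨g, h, by rw [← hg, ← hh, sub_add_cancel], ?_, hh ▸ hf₁⟩
  rw [← hg, sub_eq_add_neg]
  exact le_trans (le_min le_rfl (by rwa [order_neg])) min_order_le_add

lemma le_order_of_mem_Mxy_pow {k : ℕ} {f : R2} (hf : f ∈ Mxy ^ k) :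
    (k : ℕ∞) ≤ f.order := by
  induction k generalizing f with
  | zero => simp
  | succ k ih =>
    rw [pow_succ] at hf
    refine Submodule.mul_induction_on hf (fun a ha b hb => ?_)
      fun a b ha hb => (le_min ha hb).trans min_order_le_add
    have hb' : 1 ≤ b.order :=
      one_le_order_iff_constCoeff_eq_zero.2 (constantCoeff_eq_zero_of_mem_Mxy hb)
    push_cast
    exact (add_le_add (ih ha) hb').trans le_order_mul

lemma mem_Mxy_pow_of_le_order {k : ℕ} {f : R2} (hf : (k : ℕ∞) ≤ f.order) :
    f ∈ Mxy ^ k := by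
  induction k generalizing f with
  | zero => simp
  | succ k ih =>
    have hf0 : constantCoeff f = 0 :=
      one_le_order_iff_constCoeff_eq_zero.1 (le_trans (by simp) hf)
    obtain ⟨g, h, rfl, hg, hh⟩ := exists_eq_X_zero_mul_add_X_one_mul hf0
    have le_of_X_mul {i : Fin 2} {p : R2} (hp : ((k + 1 : ℕ) : ℕ∞) ≤ (X i * p).order) :
        (k : ℕ∞) ≤ p.order := by
      rw [order_mul, order_X, Nat.cast_succ, add_comm] at hp
      exact (ENat.add_le_add_iff_left ENat.one_ne_top).1 hp
    rw [pow_succ']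
    exact add_mem (Ideal.mul_mem_mul (Ideal.subset_span (by simp)) (ih (le_of_X_mul (hf.trans hg))))
      (Ideal.mul_mem_mul (Ideal.subset_span (by simp)) (ih (le_of_X_mul (hf.trans hh))))

lemma mem_Mxy_pow_iff {k : ℕ} {f : R2} : f ∈ Mxy ^ k ↔ (k : ℕ∞) ≤ f.order :=
  ⟨le_order_of_mem_Mxy_pow, mem_Mxy_pow_of_le_order⟩

lemma pd_eq_pderiv (i : Fin 2) (f : R2) : pd i f = MvPowerSeries.pderiv ℂ i f := by
  ext d
  rw [MvPowerSeries.coeff_pderiv, mul_comm]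
  rfl

lemma pd_sub (i : Fin 2) (f g : R2) : pd i (f - g) = pd i f - pd i g := by
  simp only [pd_eq_pderiv, map_sub]

lemma pd_mem_Mxy_pow (i : Fin 2) {k : ℕ} {f : R2} (hf : f ∈ Mxy ^ (k + 1)) :
    pd i f ∈ Mxy ^ k := by
  refine mem_Mxy_pow_iff.2 (le_order fun d hd => ?_)
  rw [pd_eq_pderiv, MvPowerSeries.coeff_pderiv,
    coeff_of_lt_order ((mem_Mxy_pow_iff.1 hf).trans_lt' ?_), zero_mul]
  rw [map_add, degree_single]
  exact_mod_cast Nat.add_lt_add_right (Nat.cast_lt.1 hd) 1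

def lowDegree (m : ℕ) : Finset (Fin 2 →₀ ℕ) :=
  (range m).biUnion fun k => univ.finsuppAntidiag k

lemma mem_lowDegree {m : ℕ} {d : Fin 2 →₀ ℕ} : d ∈ lowDegree m ↔ d.degree < m := by
  simp [lowDegree, degree_eq_sum]

lemma card_lowDegree (m : ℕ) : #(lowDegree m) = m * (m + 1) / 2 := by
  rw [lowDegree, card_biUnion fun k _ l _ hkl => disjoint_left.2 fun d hk hl =>
    hkl ((mem_finsuppAntidiag.1 hk).1.symm.trans (mem_finsuppAntidiag.1 hl).1)]
  have card_eq (k : ℕ) : #(univ.finsuppAntidiag k : Finset (Fin 2 →₀ ℕ)) = k + 1 := by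
    rw [card_finsuppAntidiag_nat_eq_choose, card_univ, Fintype.card_fin,
      show 2 + k - 1 = k + 1 by omega, Nat.choose_succ_self_right]
  calc ∑ k ∈ range m, #(univ.finsuppAntidiag k : Finset (Fin 2 →₀ ℕ))
      = ∑ k ∈ range (m + 1), k := by simp [card_eq, sum_range_succ']
    _ = m * (m + 1) / 2 := by rw [sum_range_id, Nat.add_sub_cancel, mul_comm]

def truncCoeffs (m : ℕ) : R2 →ₗ[ℂ] (lowDegree m → ℂ) :=
  LinearMap.pi fun d => coeff (d : Fin 2 →₀ ℕ)

lemma truncCoeffs_surjective (m : ℕ) : Function.Surjective (truncCoeffs m) := by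
  classical
  intro v
  refine ⟨fun d => if h : d ∈ lowDegree m then v ⟨d, h⟩ else 0, funext fun d => ?_⟩
  exact dif_pos d.2

lemma ker_truncCoeffs (m : ℕ) :
    LinearMap.ker (truncCoeffs m) = (Mxy ^ m).restrictScalars ℂ := by
  ext f
  rw [LinearMap.mem_ker, Submodule.restrictScalars_mem, mem_Mxy_pow_iff, funext_iff]
  refine ⟨fun h => le_order fun d hd => h ⟨d, mem_lowDegree.2 (by exact_mod_cast hd)⟩,
    fun h d => coeff_of_lt_order (h.trans_lt' (by exact_mod_cast mem_lowDegree.1 d.2))⟩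

lemma sub_C_constantCoeff_mem_Mxy (r : R2) : r - C (constantCoeff r) ∈ Mxy := by
  rw [← pow_one Mxy, mem_Mxy_pow_iff, Nat.cast_one, one_le_order_iff_constCoeff_eq_zero]
  simp

lemma restrictScalars_span_sup_Mxy_pow {ι : Type*} [Fintype ι] {m : ℕ} (hm : 1 ≤ m)
    {u : ι → R2} (hu : ∀ i, u i ∈ Mxy ^ (m - 1)) :
    (Ideal.span (Set.range u) ⊔ Mxy ^ m).restrictScalars ℂ =
      Submodule.span ℂ (Set.range u) ⊔ (Mxy ^ m).restrictScalars ℂ := by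
  refine le_antisymm (fun x hx => ?_) (sup_le ?_ ?_)
  · obtain ⟨y, hy, z, hz, rfl⟩ := Submodule.mem_sup.1 hx
    obtain ⟨c, rfl⟩ := (Ideal.mem_span_range_iff_exists_fun).1 hy
    have hsplit : ∑ i, c i * u i = ∑ i, constantCoeff (c i) • u i +
        ∑ i, (c i - C (constantCoeff (c i))) * u i := by
      simp only [sub_mul, sum_sub_distrib, smul_eq_C_mul]
      abel
    have hrest : ∑ i, (c i - C (constantCoeff (c i))) * u i ∈ Mxy ^ m := by
      refine sum_mem fun i _ => ?_
      rw [← Nat.sub_add_cancel hm, pow_succ']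
      exact Ideal.mul_mem_mul (sub_C_constantCoeff_mem_Mxy _) (hu i)
    rw [hsplit, add_assoc]
    exact Submodule.add_mem_sup
      (sum_mem fun i _ => Submodule.smul_mem _ _ (Submodule.subset_span ⟨i, rfl⟩))
      (add_mem hrest hz)
  · exact (Submodule.span_le_restrictScalars ℂ R2 _).trans
      (Submodule.restrictScalars_mono ℂ le_sup_left)
  · exact Submodule.restrictScalars_mono ℂ le_sup_right

lemma finrank_quotient_span_sup_Mxy_pow {ι : Type*} [Fintype ι] {m : ℕ} (hm : 1 ≤ m)
    {u : ι → R2} (hu : ∀ i, u i ∈ Mxy ^ (m - 1))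
    (hli : LinearIndependent ℂ (truncCoeffs m ∘ u)) :
    Module.finrank ℂ (R2 ⧸ (Ideal.span (Set.range u) ⊔ Mxy ^ m)) =
      m * (m + 1) / 2 - Fintype.card ι := by
  let W := Submodule.span ℂ (Set.range (truncCoeffs m ∘ u))
  have hW_map : W = (Submodule.span ℂ (Set.range u)).map (truncCoeffs m) := by
    rw [Submodule.map_span, ← Set.range_comp]
  have hker : LinearMap.ker (W.mkQ ∘ₗ truncCoeffs m) =
      (Ideal.span (Set.range u) ⊔ Mxy ^ m).restrictScalars ℂ := by
    rw [LinearMap.ker_comp, Submodule.ker_mkQ, hW_map,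
      Submodule.comap_map_eq, ker_truncCoeffs, restrictScalars_span_sup_Mxy_pow hm hu]
  have e :
      (R2 ⧸ (Ideal.span (Set.range u) ⊔ Mxy ^ m)) ≃ₗ[ℂ] (lowDegree m → ℂ) ⧸ W :=
    (Submodule.Quotient.restrictScalarsEquiv ℂ _).symm ≪≫ₗ
      Submodule.quotEquivOfEq _ _ hker.symm ≪≫ₗ
      LinearMap.quotKerEquivOfSurjective _ (W.mkQ_surjective.comp (truncCoeffs_surjective m))
  have hW : Module.finrank ℂ W = Fintype.card ι := finrank_span_eq_card hli
  have hV := W.finrank_quotient_add_finrank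
  rw [Module.finrank_fintype_fun_eq_card, Fintype.card_coe, card_lowDegree] at hV
  rw [e.finrank_eq]
  omega

lemma pd_coe (i : Fin 2) (p : MvPolynomial (Fin 2) ℂ) :
    pd i p = (MvPolynomial.pderiv i p : R2) := by
  rw [pd_eq_pderiv, MvPowerSeries.pderiv_coe]

lemma eq_zero_of_isHomogeneous_of_coe_mem_Mxy_pow {p : MvPolynomial (Fin 2) ℂ} {n k : ℕ}
    (hp : p.IsHomogeneous n) (hnk : n < k) (h : (p : R2) ∈ Mxy ^ k) : p = 0 := by
  ext d
  rw [MvPolynomial.coeff_zero]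
  by_cases hd : d.degree = n
  · rw [← MvPolynomial.coeff_coe]
    exact coeff_of_lt_order ((mem_Mxy_pow_iff.1 h).trans_lt' (by exact_mod_cast hd ▸ hnk))
  · exact hp.coeff_eq_zero hd

lemma linearIndependent_truncCoeffs_coe {ι : Type*} {v : ι → MvPolynomial (Fin 2) ℂ}
    (hv : LinearIndependent ℂ v) {n m : ℕ} (hhom : ∀ i, (v i).IsHomogeneous n) (hnm : n < m) :
    LinearIndependent ℂ fun i => truncCoeffs m (v i) := by
  refine hv.map (f := truncCoeffs m ∘ₗ (MvPolynomial.coeToMvPowerSeries.algHom ℂ).toLinearMap)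
    (Submodule.disjoint_def.2 fun p hp hker => ?_)
  have hp : p ∈ MvPolynomial.homogeneousSubmodule (Fin 2) ℂ n :=
    Submodule.span_le.2 (Set.range_subset_iff.2 hhom) hp
  refine eq_zero_of_isHomogeneous_of_coe_mem_Mxy_pow hp hnm ?_
  rw [← Submodule.restrictScalars_mem ℂ, ← ker_truncCoeffs]
  simpa using hker

lemma sub_coe_mem_Mxy_pow_succ {m : ℕ} {f : R2} (hf : f ∈ Mxy ^ m)
    {fm : MvPolynomial (Fin 2) ℂ} (hfm : fm.IsHomogeneous m)
    (hcoeff : ∀ d : Fin 2 →₀ ℕ, d 0 + d 1 = m → MvPolynomial.coeff d fm = coeff d f) :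
    f - fm ∈ Mxy ^ (m + 1) := by
  refine mem_Mxy_pow_iff.2 (le_order fun d hd => ?_)
  rw [map_sub, MvPolynomial.coeff_coe, sub_eq_zero]
  by_cases hdm : d.degree = m
  · rw [hcoeff d (by rwa [degree_eq_sum, Fin.sum_univ_two] at hdm)]
  · rw [hfm.coeff_eq_zero hdm, coeff_of_lt_order ((mem_Mxy_pow_iff.1 hf).trans_lt' ?_)]
    have : d.degree < m + 1 := by exact_mod_cast hd
    exact_mod_cast (by omega : d.degree < m)

theorem colength_not_unitangential_general (m μ ν : ℕ) (hm : 2 ≤ m) (f : R2)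
    (hf : f ∈ Mxy ^ m)
    (fm g : MvPolynomial (Fin 2) ℂ) (hfm : fm.IsHomogeneous m)
    (hcoeff : ∀ d : Fin 2 →₀ ℕ, d 0 + d 1 = m →
      MvPolynomial.coeff d fm = MvPowerSeries.coeff (R := ℂ) d f)
    (hμ : 1 ≤ μ) (hν : 1 ≤ ν)
    (heq : fm = MvPolynomial.X 0 ^ μ * MvPolynomial.X 1 ^ ν * g)
    (hgx : ¬ MvPolynomial.X 0 ∣ g) (hgy : ¬ MvPolynomial.X 1 ∣ g) :
    Module.finrank ℂ
        (R2 ⧸ (Ideal.span {pd 0 f, pd 1 f} + Mxy ^ m))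
      = m * (m + 1) / 2 - 2 := by
  have hm₁ : 1 ≤ m := by omega
  have hpd (i : Fin 2) : pd i f ∈ Mxy ^ (m - 1) :=
    pd_mem_Mxy_pow i (by rwa [Nat.sub_add_cancel hm₁])
  have htrunc (i : Fin 2) : truncCoeffs m (pd i f) = truncCoeffs m (pd i fm) := by
    rw [← sub_eq_zero, ← map_sub, ← pd_sub, ← LinearMap.mem_ker, ker_truncCoeffs,
      Submodule.restrictScalars_mem]
    exact pd_mem_Mxy_pow i (sub_coe_mem_Mxy_pow_succ hf hfm hcoeff)
  have hli : LinearIndependent ℂ (truncCoeffs m ∘ ![pd 0 f, pd 1 f]) := by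
    have hpderiv := MvPolynomial.linearIndependent_pderiv_X_pow_mul_X_pow_mul zero_ne_one
      (by omega : μ ≠ 0) (by omega : ν ≠ 0) hgx hgy
    rw [← heq] at hpderiv
    convert linearIndependent_truncCoeffs_coe hpderiv
      (fun i => by fin_cases i <;> exact hfm.pderiv) (by omega : m - 1 < m) using 1
    ext i : 1
    fin_cases i <;> simp [htrunc, pd_coe]
  rw [← Matrix.range_cons_cons_empty (pd 0 f) (pd 1 f) ![], Submodule.add_eq_sup,
    finrank_quotient_span_sup_Mxy_pow hm₁ (fun i => by fin_cases i <;> simp [hpd]) hli,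
    Fintype.card_fin]

/-- At a non-unitangential `m`-fold point (tangent cone `f_m = x^μ y^ν g` with two of the
tangents being the axes), the colength of `⟨f_x, f_y⟩ + ⟨x,y⟩^m` is `m(m+1)/2 - 2`. -/
theorem colength_not_unitangential (m μ ν : ℕ) (hm : 2 ≤ m) (f : R2)
    (hf : f ∈ Mxy ^ m) (hf' : f ∉ Mxy ^ (m + 1))
    (fm g : MvPolynomial (Fin 2) ℂ) (hfm : fm.IsHomogeneous m)
    (hcoeff : ∀ d : Fin 2 →₀ ℕ, d 0 + d 1 = m →
      MvPolynomial.coeff d fm = MvPowerSeries.coeff (R := ℂ) d f)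
    (hμ : 1 ≤ μ) (hν : 1 ≤ ν)
    (heq : fm = MvPolynomial.X 0 ^ μ * MvPolynomial.X 1 ^ ν * g)
    (hgx : ¬ MvPolynomial.X 0 ∣ g) (hgy : ¬ MvPolynomial.X 1 ∣ g) :
    Module.finrank ℂ
        (R2 ⧸ (Ideal.span {pd 0 f, pd 1 f} + Mxy ^ m))
      = m * (m + 1) / 2 - 2 :=
  colength_not_unitangential_general m μ ν hm f hf fm g hfm hcoeff hμ hν heq hgx hgy

end
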